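/- arXiv:1304.1224 — 6 statements merged into one kernel-verified Lean document; each statement's English description precedes it below -/
import Mathlib

section
/- For a composition α of n with m parts, the map sending a Y-word w of content α to the standard immaculate tableau T(w) placing j in row w_j (in increasing order along each row) is a bijection between Y-words of content α and standard immaculate tableaux of shape α. -/
/-!
Row `r` of `T(w)` is the increasing list of positions of the letter `r + 1` in `w`; conversely `w`
is recovered from a standard filling `T` by letting `w_j` be the index of the row containing `j`.
For `w` of content `α`, `T(w)` automatically has shape `α`, increasing rows and every entry exactly
once. The first entry of row `r` is the first occurrence of `r + 1` in `w`, so the remaining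
immaculate condition, an increasing first column, is exactly the `𝒴`-word condition.
-/

/-- An immaculate tableau of shape `α` and content `β`, encoded as a list of rows. -/
def IsImmaculate (T : List (List ℕ)) (α β : List ℕ) : Prop :=
  T.map List.length = α ∧
  (∀ r ∈ T, List.Chain' (· ≤ ·) r) ∧
  List.Chain' (· < ·) (T.map List.headI) ∧
  (∀ x ∈ T.flatten, 0 < x) ∧
  (∀ i : ℕ, T.flatten.count (i + 1) = β.getD i 0)

/-- A word (on positive letters) is a `𝒴`-word if the first occurrence of `c+1`
precedes the first occurrence of `c+2`, for every `c`. -/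
def IsYWord (w : List ℕ) : Prop :=
  (∀ x ∈ w, 0 < x) ∧
  ∀ c : ℕ, (c + 2) ∈ w → (c + 1) ∈ w ∧ w.idxOf (c + 1) < w.idxOf (c + 2)

/-- A word has content `α` if letter `j` occurs `α_j` times (and all letters are positive). -/
def HasContent (α : List ℕ) (w : List ℕ) : Prop :=
  (∀ x ∈ w, 0 < x) ∧ ∀ i : ℕ, w.count (i + 1) = α.getD i 0

open List

theorem List.eq_of_mem_getElem_of_nodup_flatten {α : Type*} {L : List (List α)}
    (hL : L.flatten.Nodup) {x : α} {i j : ℕ} (hi : i < L.length) (hj : j < L.length)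
    (hxi : x ∈ L[i]) (hxj : x ∈ L[j]) : i = j := by
  have hdisj := pairwise_iff_getElem.1 (nodup_flatten.1 hL).2
  rcases lt_trichotomy i j with h | h | h
  · exact absurd hxj (hdisj i j hi hj h hxi)
  · exact h
  · exact absurd hxi (hdisj j i hj hi h hxj)

theorem List.findIdx_mem_eq_iff {α : Type*} [DecidableEq α] {L : List (List α)}
    (hL : L.flatten.Nodup) {x : α} {r : ℕ} (hr : r < L.length) :
    L.findIdx (x ∈ ·) = r ↔ x ∈ L[r] := by
  constructor
  · rintro rfl
    simpa using findIdx_getElem (w := hr)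
  · intro hx
    have hlt : L.findIdx (x ∈ ·) < L.length :=
      findIdx_lt_length_of_exists ⟨_, getElem_mem hr, by simpa using hx⟩
    exact eq_of_mem_getElem_of_nodup_flatten hL hlt hr
      (by simpa using findIdx_getElem (w := hlt)) hx

theorem List.headI_idxsOf {α : Type*} [BEq α] [LawfulBEq α] {w : List α} {x : α} (hx : x ∈ w)
    (s : ℕ) : (w.idxsOf x s).headI = w.idxOf x + s := by
  have hne : 0 < (w.idxsOf x s).length := by simpa using count_pos_iff.2 hx
  rw [← getElem_zero_idxsOf_eq_idxOf_add hne]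
  obtain ⟨a, t, h⟩ := exists_cons_of_length_pos hne
  simp only [h, headI_cons, getElem_cons_zero]

theorem hasContent_replicate_one_iff_perm {n : ℕ} {l : List ℕ} :
    HasContent (replicate n 1) l ↔ l ~ range' 1 n := by
  have hcount : ∀ i, (range' 1 n).count (i + 1) = (replicate n 1).getD i 0 := by
    intro i
    rw [(nodup_range' 1).count]
    by_cases hi : i < n <;> simp [hi] <;> omega
  rw [perm_iff_count]
  constructor
  · rintro ⟨hpos, hl⟩ (_ | i)
    · rw [count_eq_zero_of_not_mem (fun h => (hpos 0 h).false),
        count_eq_zero_of_not_mem (by simp)]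
    · rw [hl, hcount]
  · intro hl
    refine ⟨fun x hx => ?_, fun i => by rw [hl, hcount]⟩
    exact (mem_range'_1.1 (count_pos_iff.1 (hl x ▸ count_pos_iff.2 hx))).1

namespace HasContent

variable {α w : List ℕ}

theorem sub_one_lt_length (hc : HasContent α w) {x : ℕ} (hx : x ∈ w) : x - 1 < α.length := by
  have hcount := hc.2 (x - 1)
  rw [Nat.sub_add_cancel (hc.1 x hx)] at hcount
  by_contra hge
  rw [getD_eq_default _ _ (not_lt.1 hge)] at hcount
  exact (count_pos_iff.2 hx).ne' hcount

theorem succ_mem_iff (hα : ∀ a ∈ α, 0 < a) (hc : HasContent α w) {r : ℕ} :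
    r + 1 ∈ w ↔ r < α.length := by
  refine ⟨fun h => by simpa using hc.sub_one_lt_length h, fun hr => ?_⟩
  rw [← count_pos_iff, hc.2 r, getD_eq_getElem _ _ hr]
  exact hα _ (getElem_mem hr)

theorem isYWord_iff (hα : ∀ a ∈ α, 0 < a) (hc : HasContent α w) :
    IsYWord w ↔ ∀ r, r + 1 < α.length → w.idxOf (r + 1) < w.idxOf (r + 2) := by
  constructor
  · exact fun hy r hr => (hy.2 r ((hc.succ_mem_iff hα).2 hr)).2
  · intro h
    refine ⟨hc.1, fun r hr => ?_⟩
    have hr' := (hc.succ_mem_iff hα).1 hr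
    exact ⟨(hc.succ_mem_iff hα).2 (by omega), h r hr'⟩

end HasContent

namespace Immaculate

/-- Row `r` lists the positions, counted from `1`, at which the letter `r + 1` occurs in `w`. -/
def tableauOfWord (α w : List ℕ) : List (List ℕ) :=
  (range α.length).map fun r => w.idxsOf (r + 1) 1

def wordOfTableau (n : ℕ) (T : List (List ℕ)) : List ℕ :=
  (range n).map fun j => T.findIdx (j + 1 ∈ ·) + 1

section tableauOfWord

variable {α w : List ℕ}

@[simp]
theorem length_tableauOfWord : (tableauOfWord α w).length = α.length := by
  simp [tableauOfWord]

@[simp]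
theorem getElem_tableauOfWord {r : ℕ} (hr : r < (tableauOfWord α w).length) :
    (tableauOfWord α w)[r] = w.idxsOf (r + 1) 1 := by
  simp [tableauOfWord]

theorem nodup_flatten_tableauOfWord : (tableauOfWord α w).flatten.Nodup := by
  refine nodup_flatten.2 ⟨?_, ?_⟩
  · simp only [tableauOfWord, mem_map]
    rintro _ ⟨r, -, rfl⟩
    exact nodup_idxsOf
  · refine pairwise_map.2 (pairwise_lt_range.imp fun {a b} hab x hxa hxb => ?_)
    obtain ⟨-, _, hwa⟩ := mem_idxsOf_iff_getElem_sub_pos.1 hxa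
    obtain ⟨-, _, hwb⟩ := mem_idxsOf_iff_getElem_sub_pos.1 hxb
    simp only [beq_iff_eq] at hwa hwb
    omega

theorem flatten_tableauOfWord_perm (hc : HasContent α w) :
    (tableauOfWord α w).flatten ~ range' 1 w.length := by
  refine (perm_ext_iff_of_nodup nodup_flatten_tableauOfWord (nodup_range' 1)).2 fun x => ?_
  simp only [tableauOfWord, mem_flatten, mem_map, mem_range, mem_range'_1]
  constructor
  · rintro ⟨_, ⟨r, -, rfl⟩, hx⟩
    obtain ⟨h1, hx, -⟩ := mem_idxsOf_iff_getElem_sub_pos.1 hx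
    omega
  · intro hx
    have hmem : w[x - 1] ∈ w := getElem_mem (by omega)
    refine ⟨_, ⟨w[x - 1] - 1, hc.sub_one_lt_length hmem, rfl⟩, ?_⟩
    rw [mem_idxsOf_iff_getElem_sub_pos]
    exact ⟨hx.1, by omega, by simp [Nat.sub_add_cancel (hc.1 _ hmem)]⟩

theorem isImmaculate_tableauOfWord_iff (hα : ∀ a ∈ α, 0 < a) (hc : HasContent α w) :
    IsImmaculate (tableauOfWord α w) α (replicate w.length 1) ↔ IsYWord w := by
  have hshape : (tableauOfWord α w).map length = α := by
    refine ext_getElem (by simp) fun r _ hr => ?_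
    simp [hc.2 r, hr]
  have hrows : ∀ row ∈ tableauOfWord α w, row.IsChain (· ≤ ·) := by
    simp only [tableauOfWord, mem_map]
    rintro _ ⟨r, -, rfl⟩
    exact isChain_idxsOf.imp fun _ _ => le_of_lt
  have hheads : (tableauOfWord α w).map headI =
      (range α.length).map fun r => w.idxOf (r + 1) + 1 := by
    simp only [tableauOfWord, map_map]
    exact map_congr_left fun r hr => headI_idxsOf ((hc.succ_mem_iff hα).2 (mem_range.1 hr)) 1
  have hchain : ((tableauOfWord α w).map headI).IsChain (· < ·) ↔
      ∀ r, r + 1 < α.length → w.idxOf (r + 1) < w.idxOf (r + 2) := by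
    rw [hheads, isChain_map, isChain_range]
    exact forall_congr' fun r => by simp only [Nat.succ_eq_add_one, add_assoc, Nat.reduceAdd]; omega
  rw [hc.isYWord_iff hα]
  exact ⟨fun h => hchain.1 h.2.2.1, fun h =>
    ⟨hshape, hrows, hchain.2 h, hasContent_replicate_one_iff_perm.2 (flatten_tableauOfWord_perm hc)⟩⟩

theorem succ_mem_getElem_tableauOfWord (hc : HasContent α w) {j : ℕ} (hj : j < w.length) :
    j + 1 ∈ (tableauOfWord α w)[w[j] - 1]'
      (by simpa using hc.sub_one_lt_length (getElem_mem hj)) := by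
  rw [getElem_tableauOfWord, mem_idxsOf_iff_getElem_sub_pos]
  exact ⟨by omega, by simpa using hj, by simp [Nat.sub_add_cancel (hc.1 _ (getElem_mem hj))]⟩

theorem wordOfTableau_tableauOfWord (hc : HasContent α w) :
    wordOfTableau w.length (tableauOfWord α w) = w := by
  refine ext_getElem (by simp [wordOfTableau]) fun j hj _ => ?_
  have hrow := succ_mem_getElem_tableauOfWord hc (by simpa [wordOfTableau] using hj)
  simp only [wordOfTableau, getElem_map, getElem_range]
  rw [(findIdx_mem_eq_iff nodup_flatten_tableauOfWord _).2 hrow]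
  exact Nat.sub_add_cancel (hc.1 _ (getElem_mem _))

end tableauOfWord

section wordOfTableau

variable {n : ℕ} {α : List ℕ} {T : List (List ℕ)}

@[simp]
theorem length_wordOfTableau : (wordOfTableau n T).length = n := by
  simp [wordOfTableau]

theorem _root_.IsImmaculate.length_eq {β : List ℕ} (hT : IsImmaculate T α β) :
    T.length = α.length := by
  simpa using congrArg length hT.1

theorem _root_.IsImmaculate.flatten_perm (hT : IsImmaculate T α (replicate n 1)) :
    T.flatten ~ range' 1 n :=
  hasContent_replicate_one_iff_perm.1 hT.2.2.2

theorem findIdx_lt_length_of_isImmaculate (hT : IsImmaculate T α (replicate n 1)) {j : ℕ}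
    (hj : j < n) : T.findIdx (j + 1 ∈ ·) < T.length := by
  obtain ⟨row, hrow, hj⟩ := mem_flatten.1 (hT.flatten_perm.mem_iff.2
    (mem_range'_1.2 (⟨by omega, by omega⟩ : 1 ≤ j + 1 ∧ j + 1 < 1 + n)))
  exact findIdx_lt_length_of_exists ⟨row, hrow, by simpa using hj⟩

theorem idxsOf_wordOfTableau (hT : IsImmaculate T α (replicate n 1)) {r : ℕ}
    (hr : r < T.length) : (wordOfTableau n T).idxsOf (r + 1) 1 = T[r] := by
  have hnodup : T.flatten.Nodup := hT.flatten_perm.nodup_iff.2 (nodup_range' 1)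
  have hbound : ∀ x ∈ T[r], 1 ≤ x ∧ x < 1 + n := fun x hx =>
    mem_range'_1.1 (hT.flatten_perm.subset (mem_flatten.2 ⟨_, getElem_mem hr, hx⟩))
  have hsorted : T[r].SortedLT :=
    (IsChain.sortedLE (hT.2.1 _ (getElem_mem hr))).sortedLT_of_nodup
      ((nodup_flatten.1 hnodup).1 _ (getElem_mem hr))
  refine pairwise_idxsOf.sortedLT.eq_of_mem_iff hsorted fun x => ?_
  simp only [mem_idxsOf_iff_getElem_sub_pos, wordOfTableau, getElem_map, getElem_range,
    length_map, length_range, beq_iff_eq, Nat.add_right_cancel_iff]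
  constructor
  · rintro ⟨h1, _, hx⟩
    rwa [findIdx_mem_eq_iff hnodup hr, Nat.sub_add_cancel h1] at hx
  · intro hx
    obtain ⟨h1, h2⟩ := hbound x hx
    refine ⟨h1, by omega, ?_⟩
    rwa [findIdx_mem_eq_iff hnodup hr, Nat.sub_add_cancel h1]

theorem tableauOfWord_wordOfTableau (hT : IsImmaculate T α (replicate n 1)) :
    tableauOfWord α (wordOfTableau n T) = T :=
  ext_getElem (by simp [hT.length_eq]) fun r _ hr => by
    rw [getElem_tableauOfWord, idxsOf_wordOfTableau hT hr]

theorem hasContent_wordOfTableau (hT : IsImmaculate T α (replicate n 1)) :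
    HasContent α (wordOfTableau n T) := by
  refine ⟨by simp [wordOfTableau], fun r => ?_⟩
  by_cases hr : r < T.length
  · rw [← length_idxsOf (s := 1), idxsOf_wordOfTableau hT hr, ← hT.1]
    simp [hr]
  · rw [getD_eq_default _ _ (by rw [← hT.length_eq]; omega), count_eq_zero]
    simp only [wordOfTableau, mem_map, mem_range, not_exists, not_and]
    intro j hj he
    have := findIdx_lt_length_of_isImmaculate hT hj
    omega

theorem isYWord_wordOfTableau (hα : ∀ a ∈ α, 0 < a) (hT : IsImmaculate T α (replicate n 1)) :
    IsYWord (wordOfTableau n T) := by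
  rw [← isImmaculate_tableauOfWord_iff hα (hasContent_wordOfTableau hT),
    tableauOfWord_wordOfTableau hT, length_wordOfTableau]
  exact hT

end wordOfTableau

end Immaculate

open Immaculate in
theorem yword_tableau_bijection_general (n : ℕ) (α : List ℕ)
    (hα : ∀ a ∈ α, 0 < a) :
    ∃ e : {w : List ℕ // w.length = n ∧ HasContent α w ∧ IsYWord w} ≃
          {T : List (List ℕ) // IsImmaculate T α (List.replicate n 1)},
      ∀ w, ∀ j < n, (j + 1) ∈ (e w).val.getD ((w.val.getD j 1) - 1) [] := by
  refine ⟨{ toFun := fun w => ⟨tableauOfWord α w, by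
              obtain ⟨w, rfl, hc, hy⟩ := w
              exact (isImmaculate_tableauOfWord_iff hα hc).2 hy⟩
            invFun := fun T => ⟨wordOfTableau n T, length_wordOfTableau,
              hasContent_wordOfTableau T.2, isYWord_wordOfTableau hα T.2⟩
            left_inv := fun ⟨w, hlen, hc, _⟩ => Subtype.ext <| by
              subst hlen
              exact wordOfTableau_tableauOfWord hc
            right_inv := fun T => Subtype.ext (tableauOfWord_wordOfTableau T.2) }, ?_⟩
  rintro ⟨w, rfl, hc, -⟩ j hj
  rw [getD_eq_getElem _ _ hj,
    getD_eq_getElem _ _ (by simpa using hc.sub_one_lt_length (getElem_mem hj))]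
  exact succ_mem_getElem_tableauOfWord hc hj

/-- For a composition `α` of `n`, the map sending a `𝒴`-word `w` of content `α` to the
standard immaculate tableau `T(w)` having the letter `j` in row `w_j` is a bijection
between `𝒴`-words of content `α` and standard immaculate tableaux of shape `α`. -/
theorem yword_tableau_bijection (n : ℕ) (α : List ℕ)
    (hα : ∀ a ∈ α, 0 < a) (hsum : α.sum = n) :
    ∃ e : {w : List ℕ // w.length = n ∧ HasContent α w ∧ IsYWord w} ≃
          {T : List (List ℕ) // IsImmaculate T α (List.replicate n 1)},
      ∀ w, ∀ j < n, (j + 1) ∈ (e w).val.getD ((w.val.getD j 1) - 1) [] :=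
  yword_tableau_bijection_general n α hα
end

section
/- The subspace N_α of M_α spanned by words that are not Y-words is a submodule under the 0-Hecke action π_i(w) = w if w_i ≥ w_{i+1}, π_i(w) = s_i(w) if w_i < w_{i+1}; that is, the action never maps a non-Y-word to a Y-word. -/
/-- The 0-Hecke operator `π_{i+1}` on words `w : Fin n → ℕ`. -/
def heckeWord {n : ℕ} (i : Fin (n - 1)) (w : Fin n → ℕ) : Fin n → ℕ :=
  let p : Fin n := ⟨i, by have := i.isLt; omega⟩
  let q : Fin n := ⟨(i : ℕ) + 1, by have := i.isLt; omega⟩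
  if w p < w q then w ∘ Equiv.swap p q else w

/-- A word is a `𝒴`-word if every occurrence of a letter `c+2` is preceded by an
occurrence of `c+1`; equivalently, the first occurrence of each letter `j`
precedes the first occurrence of `j+1`. -/
def IsYWordF {n : ℕ} (w : Fin n → ℕ) : Prop :=
  ∀ (p : Fin n) (c : ℕ), w p = c + 2 → ∃ q, q < p ∧ w q = c + 1

/-! Sorting the letters at positions `i, i+1` into decreasing order is undone by swapping an
adjacent descent `a > b`, and such a swap keeps a `𝒴`-word a `𝒴`-word: the only first
occurrence that can move behind its required predecessor is that of `b = a + 1`. -/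

theorem Fin.swap_apply_lt_of_lt {n : ℕ} {p q r s : Fin n} (hpq : (q : ℕ) = p + 1)
    (hrq : r ≠ q) (hsr : s < r) : Equiv.swap p q s < r := by
  rw [Equiv.swap_apply_def]
  simp only [Fin.ext_iff, Fin.lt_def, ne_eq] at *
  split_ifs <;> omega

namespace IsYWordF

variable {n : ℕ} {v : Fin n → ℕ} {p q : Fin n}

theorem comp_swap_of_adjacent (hv : IsYWordF v) (hpq : (q : ℕ) = p + 1)
    (hne : v q ≠ v p + 1) : IsYWordF (v ∘ Equiv.swap p q) := by
  have hp_lt_q : p < q := by rw [Fin.lt_def]; omega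
  intro r c hr
  by_cases hrp : r = p
  · subst hrp
    rw [Function.comp_apply, Equiv.swap_apply_left] at hr
    obtain ⟨s, hsq, hs⟩ := hv q c hr
    have hsr : s ≠ r := by rintro rfl; omega
    have hs_lt : s < r := by
      rw [Fin.lt_def] at hsq ⊢
      have := Fin.val_ne_of_ne hsr
      omega
    exact ⟨s, hs_lt, by rwa [Function.comp_apply, Equiv.swap_apply_of_ne_of_ne hsr hsq.ne]⟩
  by_cases hrq : r = q
  · subst hrq
    rw [Function.comp_apply, Equiv.swap_apply_right] at hr
    obtain ⟨s, hsp, hs⟩ := hv p c hr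
    exact ⟨s, hsp.trans hp_lt_q,
      by rwa [Function.comp_apply, Equiv.swap_apply_of_ne_of_ne hsp.ne (hsp.trans hp_lt_q).ne]⟩
  rw [Function.comp_apply, Equiv.swap_apply_of_ne_of_ne hrp hrq] at hr
  obtain ⟨s, hsr, hs⟩ := hv r c hr
  exact ⟨Equiv.swap p q s, Fin.swap_apply_lt_of_lt hpq hrq hsr, by simpa using hs⟩

theorem of_comp_swap_of_lt (hpq : (q : ℕ) = p + 1) (hlt : v p < v q)
    (h : IsYWordF (v ∘ Equiv.swap p q)) : IsYWordF v := by
  have h' := h.comp_swap_of_adjacent hpq (by simp; omega)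
  rwa [Function.comp_assoc, ← Equiv.coe_trans, Equiv.swap_swap, Equiv.coe_refl,
    Function.comp_id] at h'

theorem of_heckeWord {i : Fin (n - 1)} {w : Fin n → ℕ} (h : IsYWordF (heckeWord i w)) :
    IsYWordF w := by
  dsimp only [heckeWord] at h
  split_ifs at h with hlt
  · exact of_comp_swap_of_lt rfl hlt h
  · exact h

end IsYWordF

/-- The 0-Hecke action never maps a non-`𝒴`-word to a `𝒴`-word; hence the span `N_α`
of non-`𝒴`-words is a submodule of `M_α`. -/
theorem heckeWord_preserves_nonY (n : ℕ) (i : Fin (n - 1)) (w : Fin n → ℕ) :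
    ¬ IsYWordF w → ¬ IsYWordF (heckeWord i w) :=
  mt IsYWordF.of_heckeWord
end

section
/- In the quotient module V_α = M_α / N_α, identifying basis elements with standard immaculate tableaux via the bijection T, the 0-Hecke generator π_i acts by: π_i(T) = 0 if i and i+1 both lie in the first column of T; π_i(T) = T if i lies in a row weakly below the row of i+1; and π_i(T) = s_i(T) (swapping entries i and i+1) otherwise. -/
/-- A word has content `α` (a composition of `n` with `m` parts): its letters lie in
`{1, …, m}` and letter `j+1` occurs `α_{j+1}` times. -/
def WordHasContent {n : ℕ} (c : Composition n) (w : Fin n → ℕ) : Prop :=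
  (∀ p, 1 ≤ w p ∧ w p ≤ c.length) ∧
  ∀ j : Fin c.length,
    (Finset.univ.filter fun p => w p = (j : ℕ) + 1).card = c.blocksFun j

/-- Position `p` is the first occurrence of its letter in `w`. -/
def FirstOcc {n : ℕ} (w : Fin n → ℕ) (p : Fin n) : Prop :=
  ∀ q, w q = w p → p ≤ q

lemma descent {n : ℕ} {w : Fin n → ℕ} (hY : IsYWordF w) :
    ∀ d, 1 ≤ d → ∀ (r : Fin n) (v : ℕ), 1 ≤ v → v + d = w r → ∃ s, s < r ∧ w s = v := by
  intro d hd
  induction d, hd using Nat.le_induction with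
  | base =>
    intro r v hv h
    obtain ⟨s, hs, hws⟩ := hY r (v - 1) (by omega)
    exact ⟨s, hs, by omega⟩
  | succ d hd ih =>
    intro r v hv h
    obtain ⟨s, hs, hws⟩ := hY r (v + d - 1) (by omega)
    obtain ⟨t, ht, hwt⟩ := ih s v hv (by omega)
    exact ⟨t, ht.trans hs, hwt⟩

/-- The induced 0-Hecke action on the quotient `V_α = M_α/N_α`, stated on the
`𝒴`-word basis via the bijection with standard immaculate tableaux (`w_j` is the row
containing `j`, and a cell is in the first column iff its position is the first
occurrence of its letter): `π_i(T) = 0` (the image is a non-`𝒴`-word) if `i` and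
`i+1` are both in the first column of `T`; `π_i(T) = T` if `i` is in a row weakly
below the row of `i+1`; and `π_i(T) = s_i(T)` (swapping the entries) otherwise,
the image then being again a `𝒴`-word. -/
theorem hecke_action_on_quotient (n : ℕ) (c : Composition n) (i : Fin (n - 1))
    (w : Fin n → ℕ) (hw : WordHasContent c w) (hY : IsYWordF w) :
    ∀ (p q : Fin n), (p : ℕ) = (i : ℕ) → (q : ℕ) = (i : ℕ) + 1 →
    ((FirstOcc w p ∧ FirstOcc w q) → ¬ IsYWordF (heckeWord i w)) ∧
    (w q ≤ w p → heckeWord i w = w) ∧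
    ((w p < w q ∧ ¬ (FirstOcc w p ∧ FirstOcc w q)) →
      heckeWord i w = w ∘ Equiv.swap p q ∧ IsYWordF (heckeWord i w)) := by
  intro p q hp hq
  have hpq : (p : ℕ) + 1 = (q : ℕ) := by omega
  have hplt : p < q := by rw [Fin.lt_def]; omega
  have hne : p ≠ q := ne_of_lt hplt
  have hdef : heckeWord i w = if w p < w q then w ∘ Equiv.swap p q else w := by
    have h1 : (⟨(i : ℕ), by have := i.isLt; omega⟩ : Fin n) = p := by
      apply Fin.ext; simp [hp]
    have h2 : (⟨(i : ℕ) + 1, by have := i.isLt; omega⟩ : Fin n) = q := by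
      apply Fin.ext; simp [hq]
    simp only [heckeWord, h1, h2]
  have hwp1 : 1 ≤ w p := (hw.1 p).1
  have hwq1 : 1 ≤ w q := (hw.1 q).1
  refine ⟨?_, ?_, ?_⟩
  · rintro ⟨Fp, Fq⟩
    have hlt : w p < w q := by
      by_contra hle
      push_neg at hle
      rcases eq_or_lt_of_le hle with h | h
      · exact absurd (Fq p h.symm) (not_le_of_gt hplt)
      · obtain ⟨s, hs, hws⟩ := descent hY (w p - w q) (by omega) p (w q) hwq1 (by omega)
        exact absurd (Fq s hws) (not_le_of_gt (hs.trans hplt))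
    rw [hdef, if_pos hlt]
    intro hY'
    obtain ⟨s, hs, hws⟩ := hY' p (w q - 2)
      (by simp [Equiv.swap_apply_left]; omega)
    have hsp : s ≠ p := ne_of_lt hs
    have hsq : s ≠ q := ne_of_lt (hs.trans hplt)
    rw [Function.comp_apply, Equiv.swap_apply_of_ne_of_ne hsp hsq] at hws
    rcases eq_or_lt_of_le (by omega : w p ≤ w s) with h | h
    · exact absurd (Fp s h.symm) (not_le_of_gt hs)
    · obtain ⟨t, ht, hwt⟩ := descent hY (w s - w p) (by omega) s (w p) hwp1 (by omega)
      exact absurd (Fp t hwt) (not_le_of_gt (ht.trans hs))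
  · intro hle
    rw [hdef, if_neg (by omega)]
  · rintro ⟨hlt, hnb⟩
    rw [hdef, if_pos hlt]
    refine ⟨rfl, ?_⟩
    intro r c' hr
    rw [Function.comp_apply] at hr
    by_cases hrp : r = p
    · subst hrp
      rw [Equiv.swap_apply_left] at hr
      obtain ⟨s, hs, hws⟩ := hY q c' hr
      rcases lt_or_eq_of_le (by rw [Fin.le_def]; have := Fin.lt_def.mp hs; omega :
          s ≤ r) with h | h
      · refine ⟨s, h, ?_⟩
        rw [Function.comp_apply,
          Equiv.swap_apply_of_ne_of_ne (ne_of_lt h) (ne_of_lt hs)]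
        exact hws
      · subst h
        -- w r = c' + 1, with r = p
        rcases not_and_or.mp hnb with hF | hF
        · rw [FirstOcc] at hF; push_neg at hF
          obtain ⟨t, hwt, ht⟩ := hF
          refine ⟨t, ht, ?_⟩
          rw [Function.comp_apply,
            Equiv.swap_apply_of_ne_of_ne (ne_of_lt ht) (ne_of_lt (ht.trans hplt))]
          omega
        · rw [FirstOcc] at hF; push_neg at hF
          obtain ⟨t, hwt, ht⟩ := hF
          have htr : t < s := by
            rcases lt_or_eq_of_le (by rw [Fin.le_def]; have := Fin.lt_def.mp ht; omega :
                t ≤ s) with h' | h'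
            · exact h'
            · exfalso; subst h'; omega
          obtain ⟨u, hu, hwu⟩ := hY t c' (by omega)
          refine ⟨u, hu.trans htr, ?_⟩
          rw [Function.comp_apply,
            Equiv.swap_apply_of_ne_of_ne (ne_of_lt (hu.trans htr))
              (ne_of_lt ((hu.trans htr).trans hplt))]
          exact hwu
    · by_cases hrq : r = q
      · subst hrq
        rw [Equiv.swap_apply_right] at hr
        obtain ⟨s, hs, hws⟩ := hY p c' hr
        refine ⟨s, hs.trans hplt, ?_⟩
        rw [Function.comp_apply,
          Equiv.swap_apply_of_ne_of_ne (ne_of_lt hs) (ne_of_lt (hs.trans hplt))]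
        exact hws
      · rw [Equiv.swap_apply_of_ne_of_ne hrp hrq] at hr
        obtain ⟨s, hs, hws⟩ := hY r c' hr
        by_cases hsp : s = p
        · subst hsp
          have hqr : q < r := by
            rw [Fin.lt_def] at hs ⊢
            have h1 := Fin.val_ne_of_ne hrq
            omega
          refine ⟨q, hqr, ?_⟩
          rw [Function.comp_apply, Equiv.swap_apply_right]
          exact hws
        · by_cases hsq : s = q
          · subst hsq
            refine ⟨p, hplt.trans hs, ?_⟩
            rw [Function.comp_apply, Equiv.swap_apply_left]
            exact hws
          · refine ⟨s, hs, ?_⟩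
            rw [Function.comp_apply, Equiv.swap_apply_of_ne_of_ne hsp hsq]
            exact hws
end

section
/- The module M_α of words of content α under the 0-Hecke action is cyclically generated by the sorted word 1^{α₁}2^{α₂}⋯m^{α_m}: every word of content α is obtained by applying some product of the operators π_i to the sorted word. -/
/-- The sorted word `1^{α₁} 2^{α₂} ⋯ m^{α_m}` of a composition `α` of `n`:
position `p` carries the (1-based) index of the block containing `p`. -/
def sortedWord {n : ℕ} (c : Composition n) : Fin n → ℕ :=
  fun p => (c.index p : ℕ) + 1

open Finset

theorem toLex_comp_swap_lt {ι α : Type*} [LinearOrder ι] [LT α] {v : ι → α} {p q : ι}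
    (hpq : p < q) (h : v q < v p) : toLex (v ∘ Equiv.swap p q) < toLex v :=
  ⟨p, fun j hj => by simp [Equiv.swap_apply_of_ne_of_ne hj.ne (hj.trans hpq).ne], by simpa⟩

section Hecke

variable {n : ℕ}

def heckeLeft (i : Fin (n - 1)) : Fin n := ⟨i, by omega⟩

def heckeRight (i : Fin (n - 1)) : Fin n := ⟨i + 1, by omega⟩

theorem heckeLeft_lt_heckeRight (i : Fin (n - 1)) : heckeLeft i < heckeRight i := by
  simp [heckeLeft, heckeRight, Fin.lt_def]

theorem heckeWord_eq (i : Fin (n - 1)) (w : Fin n → ℕ) :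
    heckeWord i w = if w (heckeLeft i) < w (heckeRight i) then
      w ∘ Equiv.swap (heckeLeft i) (heckeRight i) else w := rfl

theorem heckeWord_comp_swap_of_lt {i : Fin (n - 1)} {w : Fin n → ℕ}
    (h : w (heckeRight i) < w (heckeLeft i)) :
    heckeWord i (w ∘ Equiv.swap (heckeLeft i) (heckeRight i)) = w := by
  rw [heckeWord_eq, if_pos (by simpa)]
  ext p
  simp

theorem exists_heckeRight_lt_heckeLeft {w : Fin n → ℕ} (h : ¬Monotone w) :
    ∃ i : Fin (n - 1), w (heckeRight i) < w (heckeLeft i) := by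
  cases n with
  | zero => exact absurd (fun a => a.elim0) h
  | succ m =>
    rw [Fin.monotone_iff_le_succ] at h
    push Not at h
    exact h

end Hecke

theorem Composition.index_monotone {n : ℕ} (c : Composition n) : Monotone c.index := by
  intro p q hpq
  by_contra! h
  apply lt_irrefl (q : ℕ)
  calc (q : ℕ) < c.sizeUpTo (c.index q + 1) := c.lt_sizeUpTo_index_succ q
    _ ≤ c.sizeUpTo (c.index p) := c.monotone_sizeUpTo (Nat.succ_le_of_lt h)
    _ ≤ p := c.sizeUpTo_index_le p
    _ ≤ q := hpq

theorem Composition.filter_index_eq_map_embedding {n : ℕ} (c : Composition n)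
    (j : Fin c.length) :
    ({p | c.index p = j} : Finset (Fin n)) = univ.map (c.embedding j).toEmbedding := by
  ext p
  simp [eq_comm, ← Composition.mem_range_embedding_iff']

theorem sortedWord_monotone {n : ℕ} (c : Composition n) : Monotone (sortedWord c) :=
  fun _ _ hpq => Nat.succ_le_succ (c.index_monotone hpq)

theorem wordHasContent_sortedWord {n : ℕ} (c : Composition n) :
    WordHasContent c (sortedWord c) := by
  refine ⟨fun p => ⟨Nat.succ_pos _, (c.index p).isLt⟩, fun j => ?_⟩
  simp [sortedWord, Fin.val_inj, c.filter_index_eq_map_embedding]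

namespace WordHasContent

variable {n : ℕ} {c : Composition n} {v w : Fin n → ℕ}

theorem comp_perm (hw : WordHasContent c w) (σ : Equiv.Perm (Fin n)) :
    WordHasContent c (w ∘ σ) := by
  refine ⟨fun p => hw.1 (σ p), fun j => ?_⟩
  rw [← hw.2 j]
  exact Finset.card_equiv σ (by simp)

theorem card_fiber_eq (hv : WordHasContent c v) (hw : WordHasContent c w) (a : ℕ) :
    #{p | v p = a} = #{p | w p = a} := by
  by_cases ha : 1 ≤ a ∧ a ≤ c.length
  · obtain ⟨j, rfl⟩ : ∃ j : Fin c.length, a = (j : ℕ) + 1 :=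
      ⟨⟨a - 1, by omega⟩, (by omega : a = a - 1 + 1)⟩
    rw [hv.2, hw.2]
  · have hempty : ∀ u : Fin n → ℕ, WordHasContent c u → #{p | u p = a} = 0 := by
      intro u hu
      simp only [card_eq_zero, filter_eq_empty_iff, mem_univ, true_implies]
      rintro p rfl
      exact ha (hu.1 p)
    rw [hempty v hv, hempty w hw]

theorem map_univ_eq (hv : WordHasContent c v) (hw : WordHasContent c w) :
    univ.val.map v = univ.val.map w := by
  ext a
  have hcard : #{p | a = v p} = #{p | a = w p} := by
    simpa only [eq_comm] using hv.card_fiber_eq hw a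
  rwa [Multiset.count_map, Multiset.count_map]

theorem eq_of_monotone (hv : WordHasContent c v) (hw : WordHasContent c w)
    (hmv : Monotone v) (hmw : Monotone w) : v = w := by
  have hperm : (List.ofFn v).Perm (List.ofFn w) := by
    simpa [Fin.univ_val_map] using hv.map_univ_eq hw
  exact List.ofFn_injective
    (hperm.eq_of_sortedLE (List.sortedLE_ofFn_iff.2 hmv) (List.sortedLE_ofFn_iff.2 hmw))

end WordHasContent

/-- The module `M_α` of words of content `α` is cyclically generated by the sorted
word `1^{α₁} 2^{α₂} ⋯ m^{α_m}`: every word of content `α` is obtained from it by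
applying some product of the operators `π_i`. -/
theorem words_cyclically_generated (n : ℕ) (c : Composition n) (w : Fin n → ℕ)
    (hw : WordHasContent c w) :
    ∃ l : List (Fin (n - 1)),
      l.foldl (fun v i => heckeWord i v) (sortedWord c) = w := by
  induction h : toLex w using WellFoundedLT.induction generalizing w with
  | ind x ih =>
  subst h
  by_cases hmono : Monotone w
  · exact ⟨[], (wordHasContent_sortedWord c).eq_of_monotone hw (sortedWord_monotone c) hmono⟩
  · obtain ⟨i, hi⟩ := exists_heckeRight_lt_heckeLeft hmono
    obtain ⟨l, hl⟩ := ih _ (toLex_comp_swap_lt (heckeLeft_lt_heckeRight i) hi) _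
      (hw.comp_perm _) rfl
    exact ⟨l ++ [i], by rw [List.foldl_append, hl]; exact heckeWord_comp_swap_of_lt hi⟩
end

section
/- If a standard immaculate tableau P of shape α satisfies π_i(P) = P for every i ∈ {1,...,n-1} \ S(α), then P equals the super-standard tableau Ŝ_α whose first row is 1,...,α₁, second row is α₁+1,...,α₁+α₂, etc. -/
/-- The (0-based) index of the row of `T` containing the entry `x`. -/
def rowIdx (T : List (List ℕ)) (x : ℕ) : ℕ :=
  T.findIdx fun r => decide (x ∈ r)

/-- The proper partial sums `α₁, α₁+α₂, …` of `α` excluding the total sum,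
accumulated from `s`; `properSums 0 α` is the set `S(α)`. -/
def properSums : ℕ → List ℕ → List ℕ
  | _, [] => []
  | _, [_] => []
  | s, a :: b :: rest => (s + a) :: properSums (s + a) (b :: rest)

/-- The super-standard tableau `Ŝ_α` (starting entries at `s + 1`): first row
`1, …, α₁`, second row `α₁+1, …, α₁+α₂`, etc. -/
def superStandard : ℕ → List ℕ → List (List ℕ)
  | _, [] => []
  | s, a :: rest => (List.range' (s + 1) a) :: superStandard (s + a) rest

namespace List

theorem headI_le_of_mem {l : List ℕ} (hl : l.IsChain (· ≤ ·)) {x : ℕ} (hx : x ∈ l) :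
    l.headI ≤ x := by
  cases l with
  | nil => simp at hx
  | cons y l =>
    rcases mem_cons.1 hx with rfl | hx
    · exact le_rfl
    · exact rel_of_pairwise_cons (isChain_iff_pairwise.1 hl) hx

theorem eq_range'_of_range'_subset {l : List ℕ} {m n : ℕ} (hl : l.IsChain (· ≤ ·))
    (hlen : l.length ≤ n) (hsub : range' m n ⊆ l) : l = range' m n := by
  have hperm : (range' m n).Perm l :=
    (subperm_of_subset nodup_range' hsub).perm_of_length_le (by simpa using hlen)
  exact (hperm.eq_of_pairwise (fun _ _ _ _ => le_antisymm)
    ((pairwise_lt_range' (s := m)).imp le_of_lt) (isChain_iff_pairwise.1 hl)).symm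

end List

theorem rowIdx_cons_eq_zero_iff {r : List ℕ} {Q : List (List ℕ)} {x : ℕ} :
    rowIdx (r :: Q) x = 0 ↔ x ∈ r := by
  by_cases hx : x ∈ r <;> simp [rowIdx, List.findIdx_cons, hx]

theorem rowIdx_cons_of_notMem {r : List ℕ} {Q : List (List ℕ)} {x : ℕ} (hx : x ∉ r) :
    rowIdx (r :: Q) x = rowIdx Q x + 1 := by
  simp [rowIdx, List.findIdx_cons, hx]

theorem le_of_mem_properSums {s a x : ℕ} {rest : List ℕ} (hx : x ∈ properSums s (a :: rest)) :
    s + a ≤ x := by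
  induction rest generalizing s a with
  | nil => simp [properSums] at hx
  | cons b rest ih =>
    rcases List.mem_cons.1 hx with rfl | hx
    · exact le_rfl
    · have := ih hx
      omega

theorem mem_properSums_cons {s a x : ℕ} {rest : List ℕ} (hrest : rest ≠ []) :
    x ∈ properSums s (a :: rest) ↔ x = s + a ∨ x ∈ properSums (s + a) rest := by
  obtain ⟨b, rest, rfl⟩ := List.exists_cons_of_ne_nil hrest
  exact List.mem_cons

theorem flatten_perm_range'_of_isImmaculate {P : List (List ℕ)} {α : List ℕ} {n : ℕ}
    (hP : IsImmaculate P α (List.replicate n 1)) : P.flatten.Perm (List.range' 1 n) := by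
  obtain ⟨-, -, -, hpos, hcount⟩ := hP
  refine List.perm_iff_count.2 fun x => ?_
  cases x with
  | zero =>
    rw [List.count_eq_zero.2 fun h => (hpos 0 h).false, List.count_eq_zero.2 (by simp)]
  | succ i =>
    rw [hcount i]
    rcases lt_or_ge i n with h | h
    · rw [List.getD_replicate _ h,
        List.count_eq_one_of_mem List.nodup_range' (by rw [List.mem_range'_1]; omega)]
    · rw [List.getD_eq_default _ _ (by simpa),
        List.count_eq_zero.2 (by rw [List.mem_range'_1]; omega)]

theorem mem_head_of_forall_le {r : List ℕ} {Q : List (List ℕ)}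
    (hrows : ∀ ρ ∈ Q, ρ.IsChain (· ≤ ·)) (hheads : ((r :: Q).map List.headI).IsChain (· < ·))
    (hr : r ≠ []) {m : ℕ} (hm : m ∈ (r :: Q).flatten) (hmin : ∀ x ∈ (r :: Q).flatten, m ≤ x) :
    m ∈ r := by
  obtain ⟨y, t, rfl⟩ := List.exists_cons_of_ne_nil hr
  rw [List.flatten_cons, List.mem_append] at hm
  refine hm.resolve_right fun hmQ => ?_
  obtain ⟨ρ, hρ, hmρ⟩ := List.mem_flatten.1 hmQ
  have hρm : ρ.headI ≤ m := List.headI_le_of_mem (hrows ρ hρ) hmρ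
  have hyρ : y < ρ.headI :=
    List.rel_of_pairwise_cons (List.isChain_iff_pairwise.1 hheads) (List.mem_map_of_mem hρ)
  have hmy : m ≤ y := hmin y (by simp)
  omega

theorem head_eq_range' {r : List ℕ} {Q : List (List ℕ)} {s a N : ℕ} (hra : r.length = a)
    (hrows : ∀ ρ ∈ r :: Q, ρ.IsChain (· ≤ ·)) (hheads : ((r :: Q).map List.headI).IsChain (· < ·))
    (hperm : (r :: Q).flatten.Perm (List.range' (s + 1) N)) (haN : a ≤ N)
    (hstep : ∀ i, s + 1 ≤ i → i < s + a → rowIdx (r :: Q) (i + 1) ≤ rowIdx (r :: Q) i) :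
    r = List.range' (s + 1) a := by
  rcases Nat.eq_zero_or_pos a with rfl | ha
  · simpa using hra
  have hmem (x : ℕ) : x ∈ (r :: Q).flatten ↔ s + 1 ≤ x ∧ x < s + 1 + N :=
    hperm.mem_iff.trans List.mem_range'_1
  have hfirst : s + 1 ∈ r :=
    mem_head_of_forall_le (fun ρ hρ => hrows ρ (List.mem_cons_of_mem _ hρ)) hheads
      (List.ne_nil_of_length_pos (by omega)) ((hmem _).2 (by omega)) fun x hx => ((hmem x).1 hx).1
  have hconsec : ∀ x, s + 1 ≤ x → x < s + 1 + a → x ∈ r := by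
    refine Nat.le_induction (fun _ => hfirst) fun x hx hxr hlt => ?_
    have hrow := hstep x hx (by omega)
    rw [rowIdx_cons_eq_zero_iff.2 (hxr (by omega))] at hrow
    exact rowIdx_cons_eq_zero_iff.1 (Nat.le_zero.1 hrow)
  refine List.eq_range'_of_range'_subset (hrows r List.mem_cons_self) hra.le fun x hx => ?_
  obtain ⟨hx₁, hx₂⟩ := List.mem_range'_1.1 hx
  exact hconsec x hx₁ hx₂

theorem eq_superStandard_of_rowIdx_le (α : List ℕ) (s : ℕ) (P : List (List ℕ))
    (hlen : P.map List.length = α) (hrows : ∀ r ∈ P, r.IsChain (· ≤ ·))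
    (hheads : (P.map List.headI).IsChain (· < ·))
    (hperm : P.flatten.Perm (List.range' (s + 1) α.sum))
    (hfix : ∀ i, s + 1 ≤ i → i < s + α.sum → i ∉ properSums s α →
      rowIdx P (i + 1) ≤ rowIdx P i) :
    P = superStandard s α := by
  induction α generalizing s P with
  | nil => simpa [superStandard] using hlen
  | cons a rest ih =>
    obtain ⟨r, Q, rfl⟩ : ∃ r Q, P = r :: Q :=
      List.exists_cons_of_ne_nil (by rintro rfl; simp at hlen)
    simp only [List.map_cons, List.cons.injEq] at hlen
    obtain rfl : r = List.range' (s + 1) a := by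
      refine head_eq_range' hlen.1 hrows hheads hperm (by simp) fun i hi₁ hi₂ => ?_
      refine hfix i hi₁ (by rw [List.sum_cons]; omega) fun hi => ?_
      have := le_of_mem_properSums hi
      omega
    have hQperm : Q.flatten.Perm (List.range' (s + a + 1) rest.sum) := by
      rw [List.flatten_cons, List.sum_cons, ← List.range'_append_1,
        List.perm_append_left_iff] at hperm
      rwa [add_right_comm] at hperm
    have hQfix : ∀ i, s + a + 1 ≤ i → i < s + a + rest.sum → i ∉ properSums (s + a) rest →
        rowIdx Q (i + 1) ≤ rowIdx Q i := by
      intro i hi₁ hi₂ hi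
      have hrest : rest ≠ [] := by rintro rfl; rw [List.sum_nil] at hi₂; omega
      have hrow := hfix i (by omega) (by rw [List.sum_cons]; omega)
        fun h => ((mem_properSums_cons hrest).1 h).elim (by omega) hi
      rwa [rowIdx_cons_of_notMem (by rw [List.mem_range'_1]; omega),
        rowIdx_cons_of_notMem (by rw [List.mem_range'_1]; omega),
        Nat.add_le_add_iff_right] at hrow
    rw [ih (s + a) Q hlen.2 (fun ρ hρ => hrows ρ (List.mem_cons_of_mem _ hρ)) hheads.tail hQperm
      hQfix]
    rfl

theorem fixed_by_nondescents_superstandard_general (n : ℕ) (α : List ℕ)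
    (hsum : α.sum = n) (P : List (List ℕ))
    (hP : IsImmaculate P α (List.replicate n 1))
    (hfix : ∀ i : ℕ, 1 ≤ i → i < n → i ∉ properSums 0 α →
      rowIdx P (i + 1) ≤ rowIdx P i) :
    P = superStandard 0 α := by
  subst hsum
  exact eq_superStandard_of_rowIdx_le α 0 P hP.1 hP.2.1 hP.2.2.1
    (flatten_perm_range'_of_isImmaculate hP) fun i hi₁ hi₂ => hfix i hi₁ (by omega)

/-- If a standard immaculate tableau `P` of shape `α` satisfies `π_i(P) = P`
(i.e. `i` lies in a row weakly below `i+1`) for every `i ∈ {1, …, n-1} \ S(α)`,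
then `P` is the super-standard tableau `Ŝ_α`. -/
theorem fixed_by_nondescents_superstandard (n : ℕ) (α : List ℕ)
    (hα : ∀ a ∈ α, 0 < a) (hsum : α.sum = n) (P : List (List ℕ))
    (hP : IsImmaculate P α (List.replicate n 1))
    (hfix : ∀ i : ℕ, 1 ≤ i → i < n → i ∉ properSums 0 α →
      rowIdx P (i + 1) ≤ rowIdx P i) :
    P = superStandard 0 α :=
  fixed_by_nondescents_superstandard_general n α hsum P hP hfix
end

section
/- The dimension of V_α equals the number of standard immaculate tableaux of shape α, which equals the number of Y-words of content α. -/
/-- The quotient module `V_α = M_α / N_α`, realized with basis the `𝒴`-words of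
content `α`. -/
abbrev Vmod (n : ℕ) (c : Composition n) :=
  {w : Fin n → ℕ // WordHasContent c w ∧ IsYWordF w} →₀ ℚ

namespace StandardImmaculate

open List

variable {n : ℕ}

theorem headI_le_of_mem {l : List ℕ} (h : l.Pairwise (· < ·)) {a : ℕ} (ha : a ∈ l) :
    l.headI ≤ a := by
  obtain ⟨b, t, rfl⟩ := exists_cons_of_ne_nil (ne_nil_of_mem ha)
  exact (mem_cons.1 ha).elim (·.ge) fun hat => (rel_of_pairwise_cons h hat).le

theorem headI_mem {l : List ℕ} (h : l ≠ []) : l.headI ∈ l := by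
  obtain ⟨b, t, rfl⟩ := exists_cons_of_ne_nil h
  exact mem_cons_self

theorem findIdx_mem_eq_iff {α : Type*} [DecidableEq α] {T : List (List α)}
    (hT : T.Pairwise Disjoint) {a : α} {j : ℕ} (hj : j < T.length) :
    T.findIdx (a ∈ ·) = j ↔ a ∈ T[j] := by
  rw [findIdx_eq hj]
  simp only [decide_eq_true_eq, decide_eq_false_iff_not]
  exact ⟨And.left, fun ha => ⟨ha, fun k hk haT => pairwise_iff_getElem.1 hT k j _ hj hk haT ha⟩⟩

theorem perm_range'_one_iff {L : List ℕ} :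
    L ~ range' 1 n ↔ (∀ x ∈ L, 0 < x) ∧ ∀ i, L.count (i + 1) = (replicate n 1).getD i 0 := by
  have hcount : ∀ i, (range' 1 n).count (i + 1) = (replicate n 1).getD i 0 := by
    intro i
    by_cases h : i < n
    · rw [getD_replicate _ h]
      exact count_eq_one_of_mem nodup_range' (mem_range'_1.2 (by omega))
    · rw [getD_eq_default _ _ (by simpa using h)]
      exact count_eq_zero.2 (by simp; omega)
  constructor
  · intro h
    exact ⟨fun x hx => (mem_range'_1.1 (h.subset hx)).1, fun i => h.count_eq _ ▸ hcount i⟩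
  · rintro ⟨hpos, hcnt⟩
    refine perm_iff_count.2 fun a => ?_
    cases a with
    | zero => rw [count_eq_zero.2 fun h => (hpos 0 h).false, count_eq_zero.2 (by simp)]
    | succ i => rw [hcnt, hcount]

theorem isImmaculate_replicate_one_iff {T : List (List ℕ)} {α : List ℕ} :
    IsImmaculate T α (replicate n 1) ↔
      T.map length = α ∧ (∀ r ∈ T, IsChain (· ≤ ·) r) ∧ IsChain (· < ·) (T.map headI) ∧
        T.flatten ~ range' 1 n := by
  rw [perm_range'_one_iff]
  rfl

-- Rows are indexed from `0` and entries are positions counted from `1`.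
def row (w : Fin n → ℕ) (j : ℕ) : List ℕ :=
  ((finRange n).filter (w · = j + 1)).map (·.val + 1)

def toTableau (ℓ : ℕ) (w : Fin n → ℕ) : List (List ℕ) :=
  (range ℓ).map (row w)

def ofTableau (n : ℕ) (T : List (List ℕ)) (p : Fin n) : ℕ :=
  T.findIdx (p.val + 1 ∈ ·) + 1

theorem mem_row {w : Fin n → ℕ} {j m : ℕ} :
    m ∈ row w j ↔ ∃ p : Fin n, w p = j + 1 ∧ p.val + 1 = m := by
  simp [row]

theorem pairwise_lt_row (w : Fin n → ℕ) (j : ℕ) : (row w j).Pairwise (· < ·) :=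
  pairwise_map.2 <| ((pairwise_lt_finRange n).filter _).imp fun h => Nat.succ_lt_succ h

theorem length_row (w : Fin n → ℕ) (j : ℕ) :
    (row w j).length = (Finset.univ.filter fun p => w p = j + 1).card := by
  rw [row, length_map]
  rfl

theorem disjoint_row (w : Fin n → ℕ) {i j : ℕ} (hij : i ≠ j) : (row w i).Disjoint (row w j) := by
  intro m hi hj
  obtain ⟨p, hp, rfl⟩ := mem_row.1 hi
  obtain ⟨q, hq, hqp⟩ := mem_row.1 hj
  obtain rfl : q = p := Fin.ext (by omega)
  omega

@[simp]
theorem length_toTableau (ℓ : ℕ) (w : Fin n → ℕ) : (toTableau ℓ w).length = ℓ := by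
  simp [toTableau]

@[simp]
theorem getElem_toTableau (ℓ : ℕ) (w : Fin n → ℕ) {j : ℕ} (hj : j < (toTableau ℓ w).length) :
    (toTableau ℓ w)[j] = row w j := by
  simp [toTableau]

theorem flatten_toTableau_perm {ℓ : ℕ} {w : Fin n → ℕ} (hw : ∀ p, 1 ≤ w p ∧ w p ≤ ℓ) :
    (toTableau ℓ w).flatten ~ range' 1 n := by
  have hnodup : (toTableau ℓ w).flatten.Nodup := by
    refine nodup_flatten.2 ⟨?_, ?_⟩
    · simp only [toTableau, mem_map]
      rintro _ ⟨j, -, rfl⟩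
      exact (pairwise_lt_row w j).nodup
    · exact pairwise_map.2 <| pairwise_lt_range.imp fun h => disjoint_row w h.ne
  refine (perm_ext_iff_of_nodup hnodup nodup_range').2 fun m => ?_
  simp only [toTableau, mem_flatten, mem_map, mem_range, mem_range'_1]
  constructor
  · rintro ⟨_, ⟨j, -, rfl⟩, hm⟩
    obtain ⟨p, -, rfl⟩ := mem_row.1 hm
    omega
  · intro hm
    set p : Fin n := ⟨m - 1, by omega⟩
    have hp := hw p
    exact ⟨_, ⟨w p - 1, by omega, rfl⟩, mem_row.2 ⟨p, by omega, by simp [p]; omega⟩⟩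

theorem wordHasContent_iff (c : Composition n) (w : Fin n → ℕ) :
    WordHasContent c w ↔
      (∀ p, 1 ≤ w p ∧ w p ≤ c.length) ∧ (toTableau c.length w).map length = c.blocks := by
  refine and_congr_right fun _ => ?_
  simp only [ext_getElem_iff, length_map, length_toTableau, c.blocks_length, getElem_map,
    getElem_toTableau, length_row, true_and]
  exact ⟨fun h j hj _ => h ⟨j, hj⟩, fun h j => h j j.2 (by simp)⟩

theorem row_ne_nil {c : Composition n} {w : Fin n → ℕ} (hw : WordHasContent c w) {j : ℕ}
    (hj : j < c.length) : row w j ≠ [] := by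
  rw [← length_pos_iff, length_row, hw.2 ⟨j, hj⟩]
  exact c.one_le_blocksFun _

theorem isYWordF_iff_isChain_headI {c : Composition n} {w : Fin n → ℕ}
    (hw : WordHasContent c w) :
    IsYWordF w ↔ IsChain (· < ·) ((toTableau c.length w).map headI) := by
  have hle p : w p ≤ c.length := (hw.1 p).2
  have hne j (hj : j < c.length) : row w j ≠ [] := row_ne_nil hw hj
  simp only [toTableau, map_map, isChain_map, isChain_range, Function.comp_apply,
    Nat.succ_eq_add_one]
  constructor
  · intro hy i hi
    obtain ⟨p, hp, hp_head⟩ := mem_row.1 (headI_mem (hne (i + 1) (by omega)))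
    obtain ⟨q, hqp, hq⟩ := hy p i hp
    have hq_head := headI_le_of_mem (pairwise_lt_row w i) (mem_row.2 ⟨q, hq, rfl⟩)
    have : q.val < p.val := hqp
    omega
  · intro hchain p i hp
    have := hle p
    obtain ⟨q, hq, hq_head⟩ := mem_row.1 (headI_mem (hne i (by omega)))
    have hheads := hchain i (by omega)
    have hp_head := headI_le_of_mem (pairwise_lt_row w (i + 1)) (mem_row.2 ⟨p, hp, rfl⟩)
    exact ⟨q, Fin.lt_def.2 (by omega), hq⟩

theorem ofTableau_mem_Icc {T : List (List ℕ)} (hT : T.flatten ~ range' 1 n) (p : Fin n) :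
    1 ≤ ofTableau n T p ∧ ofTableau n T p ≤ T.length := by
  have hp : p.val + 1 ∈ T.flatten := hT.mem_iff.2 (mem_range'_1.2 ⟨by omega, by omega⟩)
  obtain ⟨r, hr, hpr⟩ := mem_flatten.1 hp
  exact ⟨Nat.le_add_left _ _, Nat.succ_le_of_lt (findIdx_lt_length.2 ⟨r, hr, by simpa using hpr⟩)⟩

theorem ofTableau_eq_iff {T : List (List ℕ)} (hT : T.flatten.Nodup) (p : Fin n) {j : ℕ}
    (hj : j < T.length) : ofTableau n T p = j + 1 ↔ p.val + 1 ∈ T[j] := by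
  rw [ofTableau, Nat.add_right_cancel_iff]
  exact findIdx_mem_eq_iff (nodup_flatten.1 hT).2 hj

theorem ofTableau_toTableau {ℓ : ℕ} {w : Fin n → ℕ} (hw : ∀ p, 1 ≤ w p ∧ w p ≤ ℓ) :
    ofTableau n (toTableau ℓ w) = w := by
  funext p
  have := hw p
  have hnd := (flatten_toTableau_perm hw).nodup_iff.2 nodup_range'
  have hj : w p - 1 < (toTableau ℓ w).length := by simp; omega
  have := (ofTableau_eq_iff hnd p hj).2 (by simpa using mem_row.2 ⟨p, by omega, rfl⟩)
  omega

theorem toTableau_ofTableau {T : List (List ℕ)} (hT : T.flatten ~ range' 1 n)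
    (hrow : ∀ r ∈ T, IsChain (· ≤ ·) r) : toTableau T.length (ofTableau n T) = T := by
  have hnd := hT.nodup_iff.2 nodup_range'
  refine ext_getElem (length_toTableau _ _) fun j _ hj => ?_
  have hmem := getElem_mem hj
  have hlt : T[j].Pairwise (· < ·) :=
    ((isChain_iff_pairwise.1 (hrow _ hmem)).and ((nodup_flatten.1 hnd).1 _ hmem)).imp
      fun h => lt_of_le_of_ne h.1 h.2
  rw [getElem_toTableau]
  refine (pairwise_lt_row _ j).eq_of_mem_iff hlt fun m => ?_
  rw [mem_row]
  constructor
  · rintro ⟨p, hp, rfl⟩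
    exact (ofTableau_eq_iff hnd p hj).1 hp
  · intro hm
    have := mem_range'_1.1 (hT.subset (mem_flatten.2 ⟨_, hmem, hm⟩))
    refine ⟨⟨m - 1, by omega⟩, (ofTableau_eq_iff hnd _ hj).2 ?_, by simp; omega⟩
    rwa [Nat.sub_add_cancel this.1]

theorem finite_setOf_wordHasContent (c : Composition n) :
    {w : Fin n → ℕ | WordHasContent c w}.Finite :=
  (Set.Finite.pi fun _ => Set.finite_Icc 1 c.length).subset fun _ hw p _ => hw.1 p

theorem isImmaculate_toTableau {c : Composition n} {w : Fin n → ℕ} (hw : WordHasContent c w)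
    (hy : IsYWordF w) : IsImmaculate (toTableau c.length w) c.blocks (replicate n 1) := by
  obtain ⟨hbd, hlen⟩ := (wordHasContent_iff c w).1 hw
  refine isImmaculate_replicate_one_iff.2
    ⟨hlen, ?_, (isYWordF_iff_isChain_headI hw).1 hy, flatten_toTableau_perm hbd⟩
  simp only [toTableau, mem_map]
  rintro _ ⟨j, -, rfl⟩
  exact isChain_iff_pairwise.2 ((pairwise_lt_row w j).imp le_of_lt)

theorem ofTableau_spec {c : Composition n} {T : List (List ℕ)}
    (hT : IsImmaculate T c.blocks (replicate n 1)) :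
    (WordHasContent c (ofTableau n T) ∧ IsYWordF (ofTableau n T)) ∧
      toTableau c.length (ofTableau n T) = T := by
  obtain ⟨hlen, hrow, hhead, hperm⟩ := isImmaculate_replicate_one_iff.1 hT
  have hTlen : T.length = c.length := by simpa using congrArg length hlen
  have hTT : toTableau c.length (ofTableau n T) = T :=
    hTlen ▸ toTableau_ofTableau hperm hrow
  have hw : WordHasContent c (ofTableau n T) :=
    (wordHasContent_iff c _).2 ⟨hTlen ▸ ofTableau_mem_Icc hperm, by rw [hTT]; exact hlen⟩
  exact ⟨⟨hw, (isYWordF_iff_isChain_headI hw).2 (by rw [hTT]; exact hhead)⟩, hTT⟩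

def yWordEquivImmaculate (c : Composition n) :
    {w : Fin n → ℕ // WordHasContent c w ∧ IsYWordF w} ≃
      {T : List (List ℕ) // IsImmaculate T c.blocks (replicate n 1)} where
  toFun w := ⟨toTableau c.length w, isImmaculate_toTableau w.2.1 w.2.2⟩
  invFun T := ⟨ofTableau n T, (ofTableau_spec T.2).1⟩
  left_inv w := Subtype.ext (ofTableau_toTableau ((wordHasContent_iff c _).1 w.2.1).1)
  right_inv T := Subtype.ext (ofTableau_spec T.2).2

end StandardImmaculate

open StandardImmaculate in
/-- The dimension of `V_α` equals the number of `𝒴`-words of content `α`, which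
equals the number of standard immaculate tableaux of shape `α`. -/
theorem Vmod_dim (n : ℕ) (c : Composition n) :
    Module.finrank ℚ (Vmod n c) =
      Nat.card {w : Fin n → ℕ // WordHasContent c w ∧ IsYWordF w} ∧
    Nat.card {w : Fin n → ℕ // WordHasContent c w ∧ IsYWordF w} =
      Nat.card {T : List (List ℕ) //
        IsImmaculate T c.blocks (List.replicate n 1)} := by
  have : Finite {w : Fin n → ℕ // WordHasContent c w ∧ IsYWordF w} :=
    ((finite_setOf_wordHasContent c).subset fun _ hw => hw.1).to_subtype
  have := Fintype.ofFinite {w : Fin n → ℕ // WordHasContent c w ∧ IsYWordF w}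
  exact ⟨(Module.finrank_finsupp_self ℚ).trans Nat.card_eq_fintype_card.symm,
    Nat.card_congr (yWordEquivImmaculate c)⟩
end
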